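/- Let n ≥ 2, let K ∈ 𝒦₀(ℝⁿ), and let r ≥ 0. Then the Lebesgue measure of the radial parallel set {x ∈ ℝⁿ : rdist(x,K) ≤ r} equals |Dₙ| · ∫_{S^{n−1}} (ρ_K(u) + r)^n dσ(u) = Σ_{j=0}^{n} r^j · |D_j| · Ṽ_{n−j}(K) (radial Steiner formula). -/

import Mathlib

open MeasureTheory

/-- The uniform (rotation invariant) probability measure `σ` on the unit sphere
`S^{n-1} ⊆ ℝⁿ`. -/
noncomputable def sphereProb (n : ℕ) :
    Measure (Metric.sphere (0 : EuclideanSpace ℝ (Fin n)) 1) :=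
  ((volume : Measure (EuclideanSpace ℝ (Fin n))).toSphere Set.univ)⁻¹ •
    (volume : Measure (EuclideanSpace ℝ (Fin n))).toSphere

/-- The radial function `ρ_K(u) = max {r : r • u ∈ K}` of a set `K ⊆ ℝⁿ`. -/
noncomputable def radialFn {n : ℕ} (K : Set (EuclideanSpace ℝ (Fin n)))
    (u : EuclideanSpace ℝ (Fin n)) : ℝ :=
  sSup {r : ℝ | r • u ∈ K}

/-- The minimal radial distance `rdist(x, K)`:  `0` if `x ∈ K`, and
`‖x‖ - ρ_K(x/‖x‖)` otherwise. -/
noncomputable def rdist {n : ℕ} (K : Set (EuclideanSpace ℝ (Fin n)))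
    (x : EuclideanSpace ℝ (Fin n)) : ℝ :=
  letI := Classical.dec (x ∈ K)
  if x ∈ K then 0 else ‖x‖ - radialFn K (‖x‖⁻¹ • x)

/-- `|D_k| = π^{k/2} / Γ(k/2 + 1)`, the volume of the `k`-dimensional unit ball. -/
noncomputable def unitBallVolF (k : ℕ) : ℝ :=
  Real.pi ^ ((k : ℝ) / 2) / Real.Gamma ((k : ℝ) / 2 + 1)

/-- The `j`-th dual volume `Ṽ_j(K) = C(n,j)·(|Dₙ|/|D_{n-j}|)·∫_{S^{n-1}} ρ_K(u)^j dσ(u)`. -/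
noncomputable def dualVolInt (n j : ℕ) (K : Set (EuclideanSpace ℝ (Fin n))) : ℝ :=
  (n.choose j : ℝ) * (unitBallVolF n / unitBallVolF (n - j)) *
    ∫ u : Metric.sphere (0 : EuclideanSpace ℝ (Fin n)) 1,
      radialFn K ↑u ^ j ∂(sphereProb n)

/-!
Write `x = t • u` with `t > 0` and `u` on the unit sphere. Away from the origin,
`rdist(x, K) ≤ r` says exactly `t ≤ ρ_K(u) + r`, so the radial parallel set is the star body
with radial function `ρ_K + r`; on nonzero vectors `ρ_K = 1 / gauge K`, which is continuous and
positive since `K` is a convex body. The polar decomposition of Lebesgue measure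
(`Measure.measurePreserving_homeomorphUnitSphereProd`: surface measure times `t ^ (n - 1) dt`)
gives its volume as `(1 / n) ∫ (ρ_K + r) ^ n` against the surface measure, whose total mass is
`n |Dₙ|`. The second identity is the binomial expansion of `(ρ_K(u) + r) ^ n` under the integral.
-/

open Metric Set Topology

section Gauge

variable {E : Type*} [NormedAddCommGroup E] [NormedSpace ℝ E] {K : Set E}

lemma gauge_pos_of_ne_zero (hKb : Bornology.IsBounded K) (hK0 : K ∈ 𝓝 (0 : E)) {x : E}
    (hx : x ≠ 0) : 0 < gauge K x :=
  (gauge_pos (absorbent_nhds_zero hK0) (NormedSpace.isVonNBounded_of_isBounded ℝ hKb)).2 hx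

lemma gauge_le_one_iff_mem (hKc : Convex ℝ K) (hKcl : IsClosed K) (hK0 : K ∈ 𝓝 (0 : E))
    {x : E} : gauge K x ≤ 1 ↔ x ∈ K := by
  rw [gauge_le_one_iff_mem_closure hKc hK0, hKcl.closure_eq]

end Gauge

section RadialFunction

variable {n : ℕ} {K : Set (EuclideanSpace ℝ (Fin n))}

lemma radialFn_eq_inv_gauge (hKc : Convex ℝ K) (hKcp : IsCompact K) (hK0 : K ∈ 𝓝 0)
    {u : EuclideanSpace ℝ (Fin n)} (hu : u ≠ 0) : radialFn K u = (gauge K u)⁻¹ := by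
  have hg : 0 < gauge K u := gauge_pos_of_ne_zero hKcp.isBounded hK0 hu
  have hmem : ∀ {t : ℝ}, 0 ≤ t → (t • u ∈ K ↔ t * gauge K u ≤ 1) := fun ht => by
    rw [← gauge_le_one_iff_mem hKc hKcp.isClosed hK0, gauge_smul_of_nonneg ht, smul_eq_mul]
  refine IsGreatest.csSup_eq ⟨?_, fun t ht => ?_⟩
  · exact (hmem (inv_nonneg.2 hg.le)).2 (inv_mul_cancel₀ hg.ne').le
  · rcases le_or_gt t 0 with ht0 | ht0
    · exact ht0.trans (inv_nonneg.2 hg.le)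
    · rw [← one_div, le_div_iff₀ hg]
      exact (hmem ht0.le).1 ht

lemma norm_le_radialFn_iff_mem (hKc : Convex ℝ K) (hKcp : IsCompact K) (hK0 : K ∈ 𝓝 0)
    {x : EuclideanSpace ℝ (Fin n)} (hx : x ≠ 0) :
    ‖x‖ ≤ radialFn K (‖x‖⁻¹ • x) ↔ x ∈ K := by
  have hx' : 0 < ‖x‖ := norm_pos_iff.2 hx
  have hg : 0 < gauge K x := gauge_pos_of_ne_zero hKcp.isBounded hK0 hx
  rw [radialFn_eq_inv_gauge hKc hKcp hK0 (smul_ne_zero (inv_ne_zero hx'.ne') hx),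
    gauge_smul_of_nonneg (inv_nonneg.2 hx'.le), smul_eq_mul, mul_inv, inv_inv,
    ← div_eq_mul_inv, le_div_iff₀ hg, mul_le_iff_le_one_right hx',
    gauge_le_one_iff_mem hKc hKcp.isClosed hK0]

lemma rdist_le_iff (hKc : Convex ℝ K) (hKcp : IsCompact K) (hK0 : K ∈ 𝓝 0)
    {x : EuclideanSpace ℝ (Fin n)} (hx : x ≠ 0) {r : ℝ} (hr : 0 ≤ r) :
    rdist K x ≤ r ↔ ‖x‖ ≤ radialFn K (‖x‖⁻¹ • x) + r := by
  by_cases hxK : x ∈ K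
  · simp only [rdist, hxK, if_true, hr, true_iff]
    exact le_add_of_le_of_nonneg ((norm_le_radialFn_iff_mem hKc hKcp hK0 hx).2 hxK) hr
  · rw [rdist, if_neg hxK, sub_le_iff_le_add']

lemma radialFn_pos (hKc : Convex ℝ K) (hKcp : IsCompact K) (hK0 : K ∈ 𝓝 0)
    {u : EuclideanSpace ℝ (Fin n)} (hu : u ∈ sphere 0 1) : 0 < radialFn K u := by
  have hu0 : u ≠ 0 := ne_of_mem_sphere hu one_ne_zero
  rw [radialFn_eq_inv_gauge hKc hKcp hK0 hu0]
  exact inv_pos.2 (gauge_pos_of_ne_zero hKcp.isBounded hK0 hu0)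

lemma continuous_radialFn_sphere (hKc : Convex ℝ K) (hKcp : IsCompact K) (hK0 : K ∈ 𝓝 0) :
    Continuous fun u : sphere (0 : EuclideanSpace ℝ (Fin n)) 1 => radialFn K u := by
  have hu0 (u : sphere (0 : EuclideanSpace ℝ (Fin n)) 1) : u.1 ≠ 0 :=
    ne_of_mem_sphere u.2 one_ne_zero
  simp_rw [radialFn_eq_inv_gauge hKc hKcp hK0 (hu0 _)]
  exact ((continuous_gauge hKc hK0).comp continuous_subtype_val).inv₀
    fun u => (gauge_pos_of_ne_zero hKcp.isBounded hK0 (hu0 u)).ne'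

end RadialFunction

section PolarCoordinates

open Measure

lemma Measure.volumeIoiPow_apply_Iic (m : ℕ) (x : Ioi (0 : ℝ)) :
    volumeIoiPow m (Iic x) = ENNReal.ofReal (x.1 ^ (m + 1) / (m + 1)) := by
  have hx : volumeIoiPow m {x} = 0 := by
    rw [volumeIoiPow, withDensity_apply _ (measurableSet_singleton x)]
    refine setLIntegral_measure_zero _ _ ?_
    rw [comap_subtype_coe_apply measurableSet_Ioi, image_singleton, measure_singleton]
  rw [← measure_congr (Iio_ae_eq_Iic' hx), volumeIoiPow_apply_Iio]

variable {E : Type*} [NormedAddCommGroup E] [NormedSpace ℝ E] [FiniteDimensional ℝ E]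
  [MeasurableSpace E] [BorelSpace E] [Nontrivial E]

theorem measure_eq_lintegral_toSphere_of_mem_iff (μ : Measure E) [μ.IsAddHaarMeasure]
    {S : Set E} {f : E → ℝ} (hf : Measurable fun u : sphere (0 : E) 1 => f u)
    (hf_pos : ∀ u ∈ sphere (0 : E) 1, 0 < f u)
    (hS : ∀ x ≠ 0, x ∈ S ↔ ‖x‖ ≤ f (‖x‖⁻¹ • x)) :
    μ S = ENNReal.ofReal (Module.finrank ℝ E : ℝ)⁻¹ *
      ∫⁻ u, ENNReal.ofReal (f u ^ Module.finrank ℝ E) ∂μ.toSphere := by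
  set d := Module.finrank ℝ E
  have hd : d - 1 + 1 = d := Nat.sub_add_cancel Module.finrank_pos
  set T : Set (sphere (0 : E) 1 × Ioi (0 : ℝ)) := {p | (p.2 : ℝ) ≤ f p.1}
  have hT : MeasurableSet T :=
    measurableSet_le (measurable_subtype_coe.comp measurable_snd) (hf.comp measurable_fst)
  have hpre : Subtype.val ⁻¹' S = homeomorphUnitSphereProd E ⁻¹' T := by
    ext x
    simp only [mem_preimage, T, mem_ofPred_eq, homeomorphUnitSphereProd_apply_fst_coe,
      homeomorphUnitSphereProd_apply_snd_coe]
    exact hS x.1 x.2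
  have hsection (u : sphere (0 : E) 1) : volumeIoiPow (d - 1) (Prod.mk u ⁻¹' T) =
      ENNReal.ofReal (d : ℝ)⁻¹ * ENNReal.ofReal (f u ^ d) := by
    have hIic : Prod.mk u ⁻¹' T = Iic ⟨f u, hf_pos u u.2⟩ := by
      ext t
      simp [T, ← Subtype.coe_le_coe]
    rw [hIic, volumeIoiPow_apply_Iic, ← Nat.cast_add_one, hd, div_eq_inv_mul,
      ENNReal.ofReal_mul (by positivity)]
  calc μ S = μ.comap Subtype.val (Subtype.val ⁻¹' S : Set ({0}ᶜ : Set E)) := by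
        rw [comap_subtype_coe_apply (measurableSet_singleton 0).compl,
          Subtype.image_preimage_coe, inter_comm, ← sdiff_eq,
          measure_sdiff_null (measure_singleton _)]
    _ = (μ.toSphere.prod (volumeIoiPow (d - 1))) T := by
        rw [hpre, μ.measurePreserving_homeomorphUnitSphereProd.measure_preimage
          hT.nullMeasurableSet]
    _ = ∫⁻ u, volumeIoiPow (d - 1) (Prod.mk u ⁻¹' T) ∂μ.toSphere := prod_apply hT
    _ = _ := by
        rw [lintegral_congr hsection]
        exact lintegral_const_mul' _ _ ENNReal.ofReal_ne_top

end PolarCoordinates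

lemma integral_add_const_pow {α : Type*} [MeasurableSpace α] {μ : Measure α} {g : α → ℝ}
    (hg : ∀ k, Integrable (fun a => g a ^ k) μ) (r : ℝ) (n : ℕ) :
    ∫ a, (g a + r) ^ n ∂μ =
      ∑ j ∈ Finset.range (n + 1), r ^ j * n.choose j * ∫ a, g a ^ (n - j) ∂μ := by
  simp_rw [add_comm _ r, add_pow]
  rw [integral_finsetSum _ fun j _ => ((hg _).const_mul _).mul_const _]
  refine Finset.sum_congr rfl fun j _ => ?_
  rw [integral_mul_const, integral_const_mul]
  ring

lemma unitBallVolF_pos (k : ℕ) : 0 < unitBallVolF k :=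
  div_pos (Real.rpow_pos_of_pos Real.pi_pos _) (Real.Gamma_pos_of_pos (by positivity))

lemma unitBallVolF_mul_dualVolInt_sub {n j : ℕ} (hj : j ≤ n)
    (K : Set (EuclideanSpace ℝ (Fin n))) :
    unitBallVolF j * dualVolInt n (n - j) K =
      n.choose j * unitBallVolF n * ∫ u, radialFn K u ^ (n - j) ∂sphereProb n := by
  rw [dualVolInt, Nat.sub_sub_self hj, Nat.choose_symm hj]
  field_simp [(unitBallVolF_pos j).ne']

section EuclideanSphere

variable {n : ℕ} [NeZero n]

lemma volume_ball_zero_one_toReal :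
    (volume (ball (0 : EuclideanSpace ℝ (Fin n)) 1)).toReal = unitBallVolF n := by
  have hpi : √Real.pi ^ n = Real.pi ^ ((n : ℝ) / 2) := by
    rw [Real.sqrt_eq_rpow, ← Real.rpow_natCast, ← Real.rpow_mul Real.pi_pos.le,
      one_div_mul_eq_div]
  rw [EuclideanSpace.volume_ball, Fintype.card_fin, ENNReal.ofReal_one, one_pow, one_mul,
    ENNReal.toReal_ofReal (by positivity), hpi, unitBallVolF]

lemma toSphere_univ_toReal :
    ((volume : Measure (EuclideanSpace ℝ (Fin n))).toSphere univ).toReal =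
      n * unitBallVolF n := by
  rw [Measure.toSphere_apply_univ, ENNReal.toReal_mul, ENNReal.toReal_natCast,
    volume_ball_zero_one_toReal, finrank_euclideanSpace_fin]

instance isProbabilityMeasure_sphereProb : IsProbabilityMeasure (sphereProb n) := by
  constructor
  rw [sphereProb, Measure.smul_apply, smul_eq_mul, ENNReal.inv_mul_cancel
    (Measure.measure_univ_ne_zero.2 (Measure.toSphere_ne_zero _)) (measure_ne_top _ _)]

lemma integral_sphereProb (g : sphere (0 : EuclideanSpace ℝ (Fin n)) 1 → ℝ) :
    ∫ u, g u ∂sphereProb n = (n * unitBallVolF n)⁻¹ * ∫ u, g u ∂volume.toSphere := by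
  rw [sphereProb, integral_smul_measure, ENNReal.toReal_inv, toSphere_univ_toReal, smul_eq_mul]

theorem volume_toReal_eq_unitBallVolF_mul_integral_sphereProb
    {S : Set (EuclideanSpace ℝ (Fin n))} {f : EuclideanSpace ℝ (Fin n) → ℝ}
    (hf : Continuous fun u : sphere (0 : EuclideanSpace ℝ (Fin n)) 1 => f u)
    (hf_pos : ∀ u ∈ sphere (0 : EuclideanSpace ℝ (Fin n)) 1, 0 < f u)
    (hS : ∀ x ≠ 0, x ∈ S ↔ ‖x‖ ≤ f (‖x‖⁻¹ • x)) :
    (volume S).toReal = unitBallVolF n * ∫ u, f u ^ n ∂sphereProb n := by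
  rw [measure_eq_lintegral_toSphere_of_mem_iff volume hf.measurable hf_pos hS,
    finrank_euclideanSpace_fin, integral_sphereProb, integral_eq_lintegral_of_nonneg_ae
      (.of_forall fun u => pow_nonneg (hf_pos _ u.2).le n) (hf.pow n).aestronglyMeasurable,
    ENNReal.toReal_mul, ENNReal.toReal_ofReal (by positivity)]
  have : (n : ℝ) ≠ 0 := Nat.cast_ne_zero.2 (NeZero.ne n)
  field_simp [(unitBallVolF_pos n).ne']

end EuclideanSphere

/-- Radial Steiner formula: for a convex body `K ⊆ ℝⁿ` (`n ≥ 2`) containing the origin in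
its interior and `r ≥ 0`, the Lebesgue measure of `{x : rdist(x,K) ≤ r}` equals
`|Dₙ| ∫_{S^{n-1}} (ρ_K(u) + r)^n dσ(u) = Σ_{j=0}^n r^j |D_j| Ṽ_{n-j}(K)`. -/
theorem stmt7 {n : ℕ} (hn : 2 ≤ n)
    (K : Set (EuclideanSpace ℝ (Fin n)))
    (hKcp : IsCompact K) (hKcv : Convex ℝ K) (hKint : 0 ∈ interior K)
    (r : ℝ) (hr : 0 ≤ r) :
    (volume {x : EuclideanSpace ℝ (Fin n) | rdist K x ≤ r}).toReal
      = unitBallVolF n * ∫ u : Metric.sphere (0 : EuclideanSpace ℝ (Fin n)) 1,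
          (radialFn K ↑u + r) ^ n ∂(sphereProb n)
    ∧ unitBallVolF n * (∫ u : Metric.sphere (0 : EuclideanSpace ℝ (Fin n)) 1,
          (radialFn K ↑u + r) ^ n ∂(sphereProb n))
      = ∑ j ∈ Finset.range (n + 1), r ^ j * unitBallVolF j * dualVolInt n (n - j) K := by
  have : NeZero n := ⟨by omega⟩
  have hK0 : K ∈ 𝓝 0 := mem_interior_iff_mem_nhds.1 hKint
  have hρ := continuous_radialFn_sphere hKcv hKcp hK0
  refine ⟨volume_toReal_eq_unitBallVolF_mul_integral_sphereProb (hρ.add continuous_const)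
    (fun u hu => add_pos_of_pos_of_nonneg (radialFn_pos hKcv hKcp hK0 hu) hr)
    (fun x hx => rdist_le_iff hKcv hKcp hK0 hx hr), ?_⟩
  rw [integral_add_const_pow (fun k => (hρ.pow k).integrable_of_hasCompactSupport
    (.of_compactSpace _)), Finset.mul_sum]
  refine Finset.sum_congr rfl fun j hj => ?_
  rw [mul_assoc (r ^ j) (unitBallVolF j),
    unitBallVolF_mul_dualVolInt_sub (Finset.mem_range_succ_iff.1 hj)]
  ring
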